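/- For the scalar closed-loop vector field f(x) = (1−k)x − 2x²·sgn(x) with k > 1, the function φ(x) = (|x| / (|x| + (k−1)/2))^{1/(k−1)} satisfies φ'(x)·f(x) = −φ(x) for all x ∈ (0, 1], i.e., φ is a Koopman eigenfunction with eigenvalue −1. -/

import Mathlib

/-! With `c = (k-1)/2` the closed-loop field factors as `f(x) = -2x(x+c)`, and the logarithmic
derivative of `φ(y) = (y/(y+c))^a` on `y > 0` is `a (1/y - 1/(y+c)) = a c / (y(y+c))`.
Hence `φ' f = -2ac φ`, which is `-φ` exactly for `a = 1/(k-1) = 1/(2c)`. -/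

theorem hasDerivAt_div_add_const_rpow {c a x : ℝ} (hx : 0 < x) (hxc : 0 < x + c) :
    HasDerivAt (fun y : ℝ => (y / (y + c)) ^ a)
      (a * c / (x * (x + c)) * (x / (x + c)) ^ a) x := by
  have hu : 0 < x / (x + c) := div_pos hx hxc
  have hdiv : HasDerivAt (fun y : ℝ => y / (y + c)) (c / (x + c) ^ 2) x := by
    have h := (hasDerivAt_id' x).fun_div ((hasDerivAt_id' x).add_const c) hxc.ne'
    rwa [show (1 * (x + c) - x * 1) / (x + c) ^ 2 = c / (x + c) ^ 2 by ring] at h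
  convert hdiv.rpow_const (p := a) (Or.inl hu.ne') using 1
  rw [Real.rpow_sub_one hu.ne']
  field_simp

theorem deriv_abs_div_abs_add_rpow_mul {c a x : ℝ} (hx : 0 < x) (hxc : 0 < x + c) :
    deriv (fun y : ℝ => (|y| / (|y| + c)) ^ a) x * (x * (x + c))
      = a * c * (|x| / (|x| + c)) ^ a := by
  have hloc : (fun y : ℝ => (|y| / (|y| + c)) ^ a) =ᶠ[nhds x] fun y => (y / (y + c)) ^ a := by
    filter_upwards [eventually_gt_nhds hx] with y hy
    rw [abs_of_pos hy]
  rw [hloc.deriv_eq, (hasDerivAt_div_add_const_rpow hx hxc).deriv, abs_of_pos hx]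
  field_simp

/-- For the scalar closed-loop vector field `f(x) = (1-k)x - 2x²` on `(0,1]`
(where `sgn x = 1`) with gain `k > 1`, the function
`φ(x) = (|x| / (|x| + (k-1)/2))^(1/(k-1))` is a Koopman eigenfunction with
eigenvalue `-1`: `φ'(x) · f(x) = -φ(x)` for all `x ∈ (0,1]`. -/
theorem stmt1 (k : ℝ) (hk : 1 < k) :
    ∀ x ∈ Set.Ioc (0 : ℝ) 1,
      deriv (fun y : ℝ => (|y| / (|y| + (k - 1) / 2)) ^ (1 / (k - 1))) x *
          ((1 - k) * x - 2 * x ^ 2)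
        = -((|x| / (|x| + (k - 1) / 2)) ^ (1 / (k - 1))) := by
  rintro x ⟨hx, -⟩
  have hxc : 0 < x + (k - 1) / 2 := by linarith
  have hf : (1 - k) * x - 2 * x ^ 2 = -2 * (x * (x + (k - 1) / 2)) := by ring
  have hk1 : k - 1 ≠ 0 := by linarith
  rw [hf, mul_left_comm, deriv_abs_div_abs_add_rpow_mul hx hxc]
  field_simp
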